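/- Let $M$ be a finitely generated $\mathbb{Z}^n$-graded module over $R = k[x_1,\ldots,x_n]$ with a Stanley decomposition $\mathcal{S} = \{(m_1,G_1),\ldots,(m_p,G_p)\}$ such that each $(\deg m_i)^+$ is square-free, $G_i = \{x_l : l \in \mathrm{supp}((\deg m_i)^+)\}$, and $|\deg m_1| \ge \cdots \ge |\deg m_p|$. Set $M^{(j)} = \sum_{i=1}^j R m_i$. Then for each $j$, there is a short exact sequence of $\mathbb{Z}^n$-graded $R$-modules $0 \to M^{(j-1)} \to M^{(j)} \to k[G_j](-\deg m_j) \to 0$, where the quotient is the free $k[G_j]$-module on the class of $m_j$. -/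

import Mathlib

/-!
Common definitions: `ℤⁿ`-graded modules over `R = k[x_1, …, x_n]`, Stanley
decompositions, the Čech complex on `x_1, …, x_n` (computing local cohomology
`H^i_𝔪` and, via the standard characterization, Castelnuovo–Mumford regularity),
and `Ext^i_R(R/I, ω_R)` for a monomial ideal `I`, computed with its natural
`ℤⁿ`-grading from the Taylor complex, which is a graded free resolution of `R/I`
on a chosen set of monomial generators of `I`.
-/

open MvPolynomial

namespace Paper

variable {k : Type} [Field k] {n : ℕ}

/-- The unit vector `e j` in `ℤⁿ`. -/
def eZ (n : ℕ) (j : Fin n) : Fin n → ℤ := fun i => if i = j then 1 else 0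

section Stanley

variable (k n)
variable (M : Type) [AddCommGroup M] [Module (MvPolynomial (Fin n) k) M]
  [Module k M] [IsScalarTower k (MvPolynomial (Fin n) k) M]

/-- The `k`-subspace `k[G]m` of `M` spanned by all `u • m`, `u` a monomial in the
variables of `G`. -/
def stanleySpan (m : M) (G : Set (Fin n)) : Submodule k M :=
  Submodule.span k
    {x | ∃ u : Fin n →₀ ℕ, ↑u.support ⊆ G ∧ x = (monomial u (1 : k) : MvPolynomial (Fin n) k) • m}

/-- `k[G]m` is a Stanley space: no monomial in the variables of `G` kills `m`. -/
def IsStanleySpace (m : M) (G : Set (Fin n)) : Prop :=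
  ∀ u : Fin n →₀ ℕ, ↑u.support ⊆ G → (monomial u (1 : k) : MvPolynomial (Fin n) k) • m ≠ 0

/-- A Stanley decomposition of `M`: finitely many pairs `(m i, G i)` such that each
`k[G i](m i)` is a Stanley space and `M = ⊕ᵢ k[G i](m i)` as `k`-vector spaces. -/
def IsStanleyDecomposition {p : ℕ} (m : Fin p → M) (G : Fin p → Set (Fin n)) : Prop :=
  (∀ i, IsStanleySpace k n M (m i) (G i)) ∧
    DirectSum.IsInternal (fun i : Fin p => stanleySpan k n M (m i) (G i))

end Stanley

section PartialSpan

variable (k n)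

/-- `M⁽ʲ⁾ = R m_1 + ⋯ + R m_j`, the `R`-submodule generated by the first `j`
elements of the family `m`. -/
noncomputable def partialSpan (M : Type) [AddCommGroup M] [Module (MvPolynomial (Fin n) k) M]
    {p : ℕ} (m : Fin p → M) (j : ℕ) : Submodule (MvPolynomial (Fin n) k) M :=
  Submodule.span (MvPolynomial (Fin n) k) (m '' {i : Fin p | (i : ℕ) < j})

end PartialSpan

section Cech

variable (k n)

/-- The multiplicative set generated by the variables `x i`, `i ∈ Λ`. -/
noncomputable def varSubmonoid (Λ : Finset (Fin n)) : Submonoid (MvPolynomial (Fin n) k) :=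
  Submonoid.closure ((fun i => (X i : MvPolynomial (Fin n) k)) '' ↑Λ)

lemma varSubmonoid_mono {Λ Λ' : Finset (Fin n)} (h : Λ ⊆ Λ') :
    varSubmonoid k n Λ ≤ varSubmonoid k n Λ' :=
  Submonoid.closure_mono (Set.image_mono (by exact_mod_cast h))

variable (M : Type) [AddCommGroup M] [Module (MvPolynomial (Fin n) k) M]

/-- The localization `M_{x_Λ}` of `M` inverting the variables in `Λ`. -/
abbrev LocM (Λ : Finset (Fin n)) : Type := LocalizedModule (varSubmonoid k n Λ) M

/-- The canonical map `M_{x_Λ} → M_{x_Λ'}` for `Λ ⊆ Λ'`. -/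
noncomputable def locMap {Λ Λ' : Finset (Fin n)} (h : Λ ⊆ Λ') :
    LocM k n M Λ →ₗ[MvPolynomial (Fin n) k] LocM k n M Λ' :=
  LocalizedModule.lift _ (LocalizedModule.mkLinearMap (varSubmonoid k n Λ') M)
    (fun s => IsLocalizedModule.map_units (LocalizedModule.mkLinearMap (varSubmonoid k n Λ') M)
      ⟨(s : MvPolynomial (Fin n) k), varSubmonoid_mono k n h s.2⟩)

/-- The `j`-th term `Čʲ(M) = ⊕_{|Λ| = j} M_{x_Λ}` of the Čech complex of `M` on the
variables `x 1, …, x n`. -/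
abbrev CechTerm (j : ℕ) : Type :=
  ∀ Λ : {S : Finset (Fin n) // S.card = j}, LocM k n M Λ.1

/-- The Čech differential, an alternating sum of localization maps. -/
noncomputable def cechD (j : ℕ) :
    CechTerm k n M j →ₗ[MvPolynomial (Fin n) k] CechTerm k n M (j + 1) :=
  LinearMap.pi fun Λ' : {S : Finset (Fin n) // S.card = j + 1} =>
    ∑ l ∈ Λ'.1.attach,
      ((-1 : ℤ) ^ ((Λ'.1.filter (fun x => x < l.1)).card)) •
        ((locMap k n M (Finset.erase_subset l.1 Λ'.1)).comp
          (LinearMap.proj (⟨Λ'.1.erase l.1, by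
            rw [Finset.card_erase_of_mem l.2, Λ'.2]; rfl⟩ :
              {S : Finset (Fin n) // S.card = j})))

/-- The coboundaries in cohomological degree `i` of the Čech complex of `M`. -/
noncomputable def cechB : (i : ℕ) → Submodule (MvPolynomial (Fin n) k) (CechTerm k n M i)
  | 0 => ⊥
  | (s + 1) => LinearMap.range (cechD k n M s)

/-- The `j`-th term of the restricted Čech subcomplex `Č_F`: only the direct summands
`M_{x_Λ}` with `F ⊆ Λ` occur (in particular it vanishes for `j < |F|`). -/
def cechSub (F : Finset (Fin n)) (j : ℕ) :
    Submodule (MvPolynomial (Fin n) k) (CechTerm k n M j) where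
  carrier := {c | ∀ Λ, ¬ F ⊆ Λ.1 → c Λ = 0}
  add_mem' := fun h1 h2 Λ h => by
    have := h1 Λ h; have := h2 Λ h
    simp_all
  zero_mem' := fun Λ h => rfl
  smul_mem' := fun r c hc Λ h => by
    have := hc Λ h
    simp_all

/-- The coboundaries of the restricted subcomplex `Č_F` in cohomological degree `i`. -/
noncomputable def cechBF (F : Finset (Fin n)) :
    (i : ℕ) → Submodule (MvPolynomial (Fin n) k) (CechTerm k n M i)
  | 0 => ⊥
  | (s + 1) => Submodule.map (cechD k n M s) (cechSub k n M F s)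

end Cech

section CechGraded

variable (k n)
variable (M : Type) [AddCommGroup M] [Module (MvPolynomial (Fin n) k) M]
variable (gr : (Fin n → ℤ) → Set M)

/-- The multidegree `a` component (for the `ℤⁿ`-grading of `M` given by `gr`) of the
localization `M_{x_Λ}`: generated by fractions `m / xˢ` where `m` is homogeneous of
multidegree `b`, `xˢ` is a monomial in the variables of `Λ` and `b - s = a`. -/
noncomputable def locPiece (Λ : Finset (Fin n)) (a : Fin n → ℤ) :
    AddSubgroup (LocM k n M Λ) :=
  AddSubgroup.closure
    {y | ∃ (m : M) (b : Fin n → ℤ) (s : Fin n →₀ ℕ)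
        (hs : (monomial s (1 : k) : MvPolynomial (Fin n) k) ∈ varSubmonoid k n Λ),
          m ∈ gr b ∧ (∀ i, b i - (s i : ℤ) = a i) ∧
            y = LocalizedModule.mk m ⟨monomial s (1 : k), hs⟩}

/-- The multidegree `a` component of the `j`-th term of the Čech complex of `M`. -/
noncomputable def cechPiece (j : ℕ) (a : Fin n → ℤ) : Set (CechTerm k n M j) :=
  {c | ∀ Λ, c Λ ∈ locPiece k n M gr Λ.1 a}

/-- The total degree `t` component of the `j`-th term of the Čech complex of `M`. -/
noncomputable def cechPieceTot (j : ℕ) (t : ℤ) : AddSubgroup (CechTerm k n M j) :=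
  ⨆ (a : Fin n → ℤ) (_ : (∑ i, a i) = t), AddSubgroup.closure (cechPiece k n M gr j a)

/-- `regLE k n M gr c` says that the Castelnuovo–Mumford regularity of the graded
module `M` (with respect to the total degree `ℤ`-grading) is at most `c`; by the
standard local cohomology characterization of regularity,
`reg M = max {i + t : Hⁱ_𝔪(M)_t ≠ 0}`, where `Hⁱ_𝔪(M)` is the cohomology of the
Čech complex of `M` on `x 1, …, x n`. -/
noncomputable def regLE (c : ℤ) : Prop :=
  ∀ (i : ℕ) (t : ℤ) (z : CechTerm k n M i),
    z ∈ LinearMap.ker (cechD k n M i) → z ∈ cechPieceTot k n M gr i t →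
      z ∉ cechB k n M i → (i : ℤ) + t ≤ c

end CechGraded

section Pieces

variable (k n)

/-- The set of homogeneous polynomials of multidegree `a ∈ ℤⁿ`
(empty if some `a i < 0`). -/
def RPieceSet (a : Fin n → ℤ) : Set (MvPolynomial (Fin n) k) :=
  {g | ∃ (c : k) (s : Fin n →₀ ℕ), (∀ i, (s i : ℤ) = a i) ∧ g = monomial s c}

/-- The multidegree `a` component of the polynomial ring, as a `k`-subspace. -/
noncomputable def RPiece (a : Fin n → ℤ) : Submodule k (MvPolynomial (Fin n) k) :=
  Submodule.span k (RPieceSet k n a)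

/-- A monomial ideal: an ideal generated by monomials. -/
def IsMonomialIdeal (I : Ideal (MvPolynomial (Fin n) k)) : Prop :=
  ∃ T : Set (Fin n →₀ ℕ), I = Ideal.span ((fun s => (monomial s (1 : k))) '' T)

/-- The multidegree `a` component of `R/I`: the image of the multidegree `a`
component of `R`. -/
def quotientGrSet (I : Ideal (MvPolynomial (Fin n) k)) (a : Fin n → ℤ) :
    Set (MvPolynomial (Fin n) k ⧸ I) :=
  (fun g => Submodule.Quotient.mk g) '' RPieceSet k n a

end Pieces

section Taylor

variable (k n)
variable {r : ℕ} (u : Fin r → (Fin n →₀ ℕ))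

/-- The exponent of the least common multiple of the monomials `x^(u l)`, `l ∈ S`. -/
noncomputable def lcmExp (S : Finset (Fin r)) : Fin n →₀ ℕ :=
  Finsupp.equivFunOnFinite.symm (fun i => S.sup (fun l => u l i))

/-- The `s`-th term of `Hom_R(T_•, ω_R)`, where `T_•` is the Taylor complex (a
`ℤⁿ`-graded free resolution of `R/I`) on the monomial generators `x^(u l)` of `I`:
as a module it is a direct sum of copies of `R` indexed by `s`-subsets of generators. -/
abbrev TaylorDual (s : ℕ) : Type :=
  ∀ _S : {S : Finset (Fin r) // S.card = s}, MvPolynomial (Fin n) k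

/-- The differential of `Hom_R(T_•, ω_R)`: the transpose of the Taylor complex
differential. -/
noncomputable def taylorD (s : ℕ) :
    TaylorDual k n (r := r) s →ₗ[MvPolynomial (Fin n) k] TaylorDual k n (r := r) (s + 1) :=
  LinearMap.pi fun S' : {S : Finset (Fin r) // S.card = s + 1} =>
    ∑ l ∈ S'.1.attach,
      (monomial (lcmExp n u S'.1 - lcmExp n u (S'.1.erase l.1))
          ((-1 : k) ^ ((S'.1.filter (fun x => x < l.1)).card))) •
        (LinearMap.proj (⟨S'.1.erase l.1, by
            rw [Finset.card_erase_of_mem l.2, S'.2]; rfl⟩ :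
              {S : Finset (Fin r) // S.card = s}))

/-- Cocycles of `Hom_R(T_•, ω_R)` in cohomological degree `i`. -/
noncomputable def extZ (i : ℕ) :
    Submodule (MvPolynomial (Fin n) k) (TaylorDual k n (r := r) i) :=
  LinearMap.ker (taylorD k n u i)

/-- Coboundaries of `Hom_R(T_•, ω_R)` in cohomological degree `i`. -/
noncomputable def extB :
    (i : ℕ) → Submodule (MvPolynomial (Fin n) k) (TaylorDual k n (r := r) i)
  | 0 => ⊥
  | (s + 1) => LinearMap.range (taylorD k n u s)

/-- `Ext^i_R(R/I, ω_R)`: the `i`-th cohomology of `Hom_R(T_•, ω_R)`, where `T_•` is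
the Taylor resolution of `R/I` on the monomial generators `x^(u l)` of `I` and
`ω_R = R(-(1,…,1))` is the canonical module. -/
noncomputable def ExtMod (i : ℕ) : Type :=
  extZ k n u i ⧸ (Submodule.comap (extZ k n u i).subtype (extB k n u i ⊓ extZ k n u i))

noncomputable instance (i : ℕ) : AddCommGroup (ExtMod k n u i) :=
  inferInstanceAs (AddCommGroup (extZ k n u i ⧸ _))

noncomputable instance (i : ℕ) : Module (MvPolynomial (Fin n) k) (ExtMod k n u i) :=
  inferInstanceAs (Module (MvPolynomial (Fin n) k) (extZ k n u i ⧸ _))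

noncomputable instance (i : ℕ) : Module k (ExtMod k n u i) :=
  inferInstanceAs (Module k (extZ k n u i ⧸ _))

noncomputable instance (i : ℕ) :
    IsScalarTower k (MvPolynomial (Fin n) k) (ExtMod k n u i) :=
  inferInstanceAs (IsScalarTower k (MvPolynomial (Fin n) k) (extZ k n u i ⧸ _))

/-- The multidegree `a` component of `Hom_R(T_s, ω_R) = ⊕_S Hom_R(R(-lcm_S), R(-(1,…,1)))`:
the component indexed by an `s`-subset `S` must be homogeneous of multidegree
`a + lcm_S - (1,…,1)` in `R`. -/
noncomputable def taylorPiece (s : ℕ) (a : Fin n → ℤ) :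
    Submodule k (TaylorDual k n (r := r) s) :=
  Submodule.pi Set.univ
    (fun S : {S : Finset (Fin r) // S.card = s} =>
      RPiece k n (fun i => a i + (lcmExp n u S.1 i : ℤ) - 1))

/-- The multidegree `a` component of `Ext^i_R(R/I, ω_R)`, i.e. of the `i`-th
cohomology of `Hom_R(T_•, ω_R)`: the image of the multidegree `a` cocycles. -/
noncomputable def extPiece (i : ℕ) (a : Fin n → ℤ) : Submodule k (ExtMod k n u i) :=
  Submodule.map
    ((Submodule.mkQ (Submodule.comap (extZ k n u i).subtype
        (extB k n u i ⊓ extZ k n u i))).restrictScalars k)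
    (Submodule.comap ((extZ k n u i).subtype.restrictScalars k) (taylorPiece k n u i a))

end Taylor

end Paper


/-
Write `M⁽ʲ⁾ = partialSpan j` for the `R`-span of the `m i` with `i < j`. The class of `m j`
generates `M⁽ʲ⁺¹⁾ / M⁽ʲ⁾`, so this quotient is `R / I` for `I = {f | f • m j ∈ M⁽ʲ⁾}`, and
everything comes down to `I = (x_l : l ∉ G j)`.

For `l ∉ G j`, expand `x_l • m j`, of degree `d j + e_l`, in the `k`-basis `xᵘ • m i`
(`supp u ⊆ G i`) of `M` and keep the terms of that degree: since `(d j)⁺` is square-free and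
`l ∉ supp (d j)⁺`, they all have `u = 0` and `|d i| = |d j| + 1`, hence `i < j`. So
`x_l • m j` lies in the `k`-span of the `m i` with `i < j`, which gives `⊇`.

The same fact shows, by induction on `i`, that `R m_i` lies in the sum of the Stanley spaces
`k[G i'] m i'` with `i' ≤ i`. For `⊆`, split `f = g + h` with `g` a polynomial in the variables
of `G j` and `h ∈ (x_l : l ∉ G j)`. If `f • m j ∈ M⁽ʲ⁾`, then `g • m j` lies both in
`k[G j] m j` and in the sum of the earlier Stanley spaces, so it vanishes, and then `g = 0`
because the `xᵘ • m j` are nonzero of pairwise distinct degrees.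
-/

open MvPolynomial

theorem iSupIndep.sum_filter_eq_sum {R M ι κ : Type*} [Ring R] [AddCommGroup M] [Module R M]
    [DecidableEq ι] {A : ι → Submodule R M} (hA : iSupIndep A) {s : Finset κ} {deg : κ → ι}
    {y : κ → M} (hy : ∀ t ∈ s, y t ∈ A (deg t)) {b : ι} (hb : ∑ t ∈ s, y t ∈ A b) :
    ∑ t ∈ s with deg t = b, y t = ∑ t ∈ s, y t := by
  have hsplit := Finset.sum_filter_add_sum_filter_not s (fun t => deg t = b) y
  have hrest : ∑ t ∈ s with ¬deg t = b, y t ∈ A b := by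
    rw [← add_sub_cancel_left (∑ t ∈ s with deg t = b, y t) (∑ t ∈ s with ¬deg t = b, y t),
      hsplit]
    refine sub_mem hb (sum_mem fun t ht => ?_)
    rw [Finset.mem_filter] at ht
    exact ht.2 ▸ hy t ht.1
  have hrest' : ∑ t ∈ s with ¬deg t = b, y t ∈ ⨆ (c) (_ : c ≠ b), A c := by
    refine sum_mem fun t ht => ?_
    rw [Finset.mem_filter] at ht
    exact Submodule.mem_iSup_of_mem (deg t) (Submodule.mem_iSup_of_mem ht.2 (hy t ht.1))
  rw [← hsplit, Submodule.disjoint_def.mp (iSupIndep_def.mp hA b) _ hrest hrest', add_zero]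

theorem Submodule.coe_span_subset_of_smul_mem {R M : Type*} [Semiring R] [AddCommMonoid M]
    [Module R M] {s : Set M} {T : AddSubmonoid M} (h : ∀ r : R, ∀ y ∈ s, r • y ∈ T) :
    (span R s : Set M) ⊆ T := by
  rw [← Submodule.coe_toAddSubmonoid, SetLike.coe_subset_coe, Submodule.span_eq_closure,
    AddSubmonoid.closure_le]
  rintro _ ⟨r, -, y, hy, rfl⟩
  exact h r y hy

theorem Submodule.exists_quotient_sup_span_singleton_equiv {R M : Type*} [CommRing R]
    [AddCommGroup M] [Module R M] (N : Submodule R M) (x : M) (I : Ideal R)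
    (hI : ∀ r : R, r • x ∈ N ↔ r ∈ I) :
    ∃ (hx : x ∈ N ⊔ (R ∙ x))
      (e : (↥(N ⊔ (R ∙ x)) ⧸ Submodule.comap (N ⊔ (R ∙ x)).subtype N) ≃ₗ[R] R ⧸ I),
      e (Submodule.Quotient.mk ⟨x, hx⟩) = Submodule.Quotient.mk 1 := by
  have hx : x ∈ N ⊔ (R ∙ x) := Submodule.mem_sup_right (Submodule.mem_span_singleton_self x)
  let φ := (Submodule.comap (N ⊔ (R ∙ x)).subtype N).mkQ ∘ₗ
    LinearMap.toSpanSingleton R _ ⟨x, hx⟩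
  have hsurj : Function.Surjective φ := by
    rintro ⟨⟨y, hy⟩⟩
    obtain ⟨z, hz, w, hw, rfl⟩ := Submodule.mem_sup.mp hy
    obtain ⟨r, rfl⟩ := Submodule.mem_span_singleton.mp hw
    refine ⟨r, (Submodule.Quotient.eq _).mpr ?_⟩
    simpa using N.neg_mem hz
  have hker : LinearMap.ker φ = I := by
    ext r
    rw [LinearMap.mem_ker, ← hI]
    exact Submodule.Quotient.mk_eq_zero _
  refine ⟨hx, (φ.quotKerEquivOfSurjective hsurj).symm ≪≫ₗ Submodule.quotEquivOfEq _ _ hker, ?_⟩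
  have hφ : φ 1 = Submodule.Quotient.mk ⟨x, hx⟩ := by simp [φ]
  rw [LinearEquiv.trans_apply, ← hφ, LinearMap.quotKerEquivOfSurjective_symm_apply]
  rfl

theorem MvPolynomial.exists_mem_restrictSupport_sub_mem_span_X {R σ : Type*} [CommRing R]
    (f : MvPolynomial σ R) (G : Set σ) :
    ∃ g ∈ restrictSupport R {u : σ →₀ ℕ | ↑u.support ⊆ G},
      f - g ∈ Ideal.span (X '' Gᶜ : Set (MvPolynomial σ R)) := by
  classical
  induction f using MvPolynomial.induction_on' with
  | monomial u c =>
    by_cases hu : ↑u.support ⊆ G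
    · exact ⟨monomial u c, by simp [hu], by simp⟩
    · obtain ⟨l, hlu, hlG⟩ := Set.not_subset.mp hu
      refine ⟨0, zero_mem _, ?_⟩
      rw [sub_zero, mem_ideal_span_X_image]
      intro v hv
      rw [Finset.mem_singleton.mp (support_monomial_subset hv)]
      exact ⟨l, hlG, Finsupp.mem_support_iff.mp hlu⟩
  | add f g hf hg =>
    obtain ⟨f', hf', hff'⟩ := hf
    obtain ⟨g', hg', hgg'⟩ := hg
    exact ⟨f' + g', add_mem hf' hg', by rw [add_sub_add_comm]; exact add_mem hff' hgg'⟩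

namespace Paper

theorem eq_zero_of_add_eq_add_eZ {n : ℕ} {a b : Fin n → ℤ} {u : Fin n →₀ ℕ} {l : Fin n}
    (hu : ∀ q, u q ≠ 0 → 0 < a q) (hb : ∀ q, b q ≤ 1) (hbl : b l ≤ 0)
    (h : (a + fun q => (u q : ℤ)) = b + eZ n l) : u = 0 := by
  ext q
  by_contra hq
  rw [Finsupp.coe_zero, Pi.zero_apply] at hq
  have hdeg := congrFun h q
  have := hu q hq
  have := hb q
  by_cases hql : q = l
  · subst hql
    simp only [Pi.add_apply, eZ, ↓reduceIte] at hdeg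
    omega
  · simp only [Pi.add_apply, eZ, hql, ↓reduceIte, add_zero] at hdeg
    omega

variable {k : Type} [Field k] {n : ℕ}
  {M : Type} [AddCommGroup M] [Module (MvPolynomial (Fin n) k) M]

theorem partialSpan_succ {p : ℕ} (m : Fin p → M) (j : Fin p) :
    partialSpan k n M m (j + 1) = partialSpan k n M m j ⊔ (MvPolynomial (Fin n) k ∙ m j) := by
  have hset : {i : Fin p | (i : ℕ) < j + 1} = insert j {i : Fin p | (i : ℕ) < j} := by
    ext i
    simp only [Set.mem_ofPred_eq, Set.mem_insert_iff, Fin.ext_iff]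
    omega
  rw [partialSpan, partialSpan, hset, Set.image_insert_eq, Submodule.span_insert, sup_comm]

variable [Module k M]

theorem monomial_smul_mem {gr : (Fin n → ℤ) → Submodule k M}
    (hX : ∀ (j : Fin n) (a : Fin n → ℤ), ∀ x ∈ gr a,
      (X j : MvPolynomial (Fin n) k) • x ∈ gr (a + eZ n j))
    (u : Fin n →₀ ℕ) {a : Fin n → ℤ} {x : M} (hx : x ∈ gr a) :
    (monomial u (1 : k) : MvPolynomial (Fin n) k) • x ∈ gr (a + fun q => (u q : ℤ)) := by
  induction u using Finsupp.induction_linear generalizing a x with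
  | zero =>
    have hdeg : (a + fun q => ((0 : Fin n →₀ ℕ) q : ℤ)) = a := by ext; simp
    rwa [hdeg, monomial_zero', C_1, one_smul]
  | add u v hu hv =>
    rw [← one_mul (1 : k), ← monomial_mul, mul_smul]
    convert hu (hv hx) using 2
    ext q
    simp [add_assoc, add_comm (v q : ℤ)]
  | single l b =>
    rw [← X_pow_eq_monomial]
    induction b generalizing a x with
    | zero =>
      have hdeg : (a + fun q => ((Finsupp.single l 0 : Fin n →₀ ℕ) q : ℤ)) = a := by ext; simp
      rwa [hdeg, pow_zero, one_smul]
    | succ b ih =>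
      rw [pow_succ, mul_smul]
      convert ih (hX l a x hx) using 2
      ext q
      by_cases hq : q = l
      · simp only [Finsupp.single_add, Finsupp.coe_add, Pi.add_apply, Nat.cast_add, hq,
          Finsupp.single_eq_same, Nat.cast_one, eZ, ↓reduceIte]
        ring
      · simp [eZ, hq]

theorem mem_span_stanleyMonomials_of_mem {gr : (Fin n → ℤ) → Submodule k M} (hgr : iSupIndep gr)
    (hX : ∀ (j : Fin n) (a : Fin n → ℤ), ∀ x ∈ gr a,
      (X j : MvPolynomial (Fin n) k) • x ∈ gr (a + eZ n j))
    {p : ℕ} {m : Fin p → M} {G : Fin p → Set (Fin n)} {d : Fin p → Fin n → ℤ}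
    (hdeg : ∀ i, m i ∈ gr (d i)) (htop : ⨆ i, stanleySpan k n M (m i) (G i) = ⊤)
    {b : Fin n → ℤ} {x : M} (hx : x ∈ gr b) :
    x ∈ Submodule.span k {y | ∃ i u, ↑u.support ⊆ G i ∧ (d i + fun q => (u q : ℤ)) = b ∧
      y = (monomial u (1 : k) : MvPolynomial (Fin n) k) • m i} := by
  classical
  let v : (Σ i : Fin p, {u : Fin n →₀ ℕ // ↑u.support ⊆ G i}) → M :=
    fun a => (monomial a.2.1 (1 : k) : MvPolynomial (Fin n) k) • m a.1
  have hspan : ⨆ i, stanleySpan k n M (m i) (G i) = Submodule.span k (Set.range v) := by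
    rw [Set.range_sigma_eq_iUnion_range, Submodule.span_iUnion]
    refine iSup_congr fun i => congrArg (Submodule.span k) ?_
    ext y
    constructor
    · rintro ⟨u, hu, rfl⟩
      exact ⟨⟨u, hu⟩, rfl⟩
    · rintro ⟨⟨u, hu⟩, rfl⟩
      exact ⟨u, hu, rfl⟩
  have hxv : x ∈ Submodule.span k (Set.range v) := hspan ▸ htop ▸ Submodule.mem_top
  obtain ⟨c, rfl⟩ := Finsupp.mem_span_range_iff_exists_finsupp.mp hxv
  rw [Finsupp.sum] at hx ⊢
  rw [← hgr.sum_filter_eq_sum (deg := fun a => d a.1 + fun q => (a.2.1 q : ℤ))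
    (fun a _ => Submodule.smul_mem _ _ (monomial_smul_mem hX _ (hdeg a.1))) hx]
  refine sum_mem fun a ha => Submodule.smul_mem _ _ (Submodule.subset_span ?_)
  exact ⟨a.1, a.2.1, a.2.2, (Finset.mem_filter.mp ha).2, rfl⟩

structure IsSortedSquarefreeStanley (gr : (Fin n → ℤ) → Submodule k M) {p : ℕ}
    (m : Fin p → M) (G : Fin p → Set (Fin n)) (d : Fin p → Fin n → ℤ) : Prop where
  iSupIndep_gr : iSupIndep gr
  X_smul_mem_gr : ∀ (j : Fin n) (a : Fin n → ℤ), ∀ x ∈ gr a,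
    (X j : MvPolynomial (Fin n) k) • x ∈ gr (a + eZ n j)
  isStanleyDecomposition : IsStanleyDecomposition k n M m G
  mem_gr : ∀ i, m i ∈ gr (d i)
  le_one : ∀ i l, d i l ≤ 1
  G_eq : ∀ i, G i = {l | 0 < d i l}
  sum_antitone : Antitone fun i => ∑ l, d i l

variable (k) in
def stanleyPrefix {p : ℕ} (m : Fin p → M) (G : Fin p → Set (Fin n)) (N : ℕ) : Submodule k M :=
  ⨆ (i : Fin p) (_ : (i : ℕ) < N), stanleySpan k n M (m i) (G i)

theorem stanleyPrefix_mono {p : ℕ} (m : Fin p → M) (G : Fin p → Set (Fin n)) {N N' : ℕ}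
    (h : N ≤ N') : stanleyPrefix k m G N ≤ stanleyPrefix k m G N' :=
  biSup_mono fun _ hi => lt_of_lt_of_le hi h

theorem partialSpan_subset_stanleyPrefix {p : ℕ} {m : Fin p → M} {G : Fin p → Set (Fin n)} {N : ℕ}
    (h : ∀ i : Fin p, (i : ℕ) < N → ∀ f : MvPolynomial (Fin n) k,
      f • m i ∈ stanleyPrefix k m G N) :
    (partialSpan k n M m N : Set M) ⊆ stanleyPrefix k m G N :=
  Submodule.coe_span_subset_of_smul_mem (T := (stanleyPrefix k m G N).toAddSubmonoid)
    fun f _ ⟨i, hi, hy⟩ => hy ▸ h i hi f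

section ScalarTower

variable [IsScalarTower k (MvPolynomial (Fin n) k) M]

theorem stanleySpan_eq_map (m : M) (G : Set (Fin n)) :
    stanleySpan k n M m G = (restrictSupport k {u : Fin n →₀ ℕ | ↑u.support ⊆ G}).map
      ((LinearMap.toSpanSingleton (MvPolynomial (Fin n) k) M m).restrictScalars k) := by
  rw [restrictSupport_eq_span, Submodule.map_span, Set.image_image]
  refine congrArg (Submodule.span k) ?_
  ext x
  constructor
  · rintro ⟨u, hu, rfl⟩
    exact ⟨u, hu, rfl⟩
  · rintro ⟨u, hu, rfl⟩
    exact ⟨u, hu, rfl⟩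

theorem IsStanleySpace.eq_zero_of_smul_eq_zero {gr : (Fin n → ℤ) → Submodule k M}
    (hgr : iSupIndep gr)
    (hX : ∀ (j : Fin n) (a : Fin n → ℤ), ∀ x ∈ gr a,
      (X j : MvPolynomial (Fin n) k) • x ∈ gr (a + eZ n j))
    {m : M} {G : Set (Fin n)} (hS : IsStanleySpace k n M m G) {a : Fin n → ℤ} (hm : m ∈ gr a)
    {f : MvPolynomial (Fin n) k} (hf : f ∈ restrictSupport k {u : Fin n →₀ ℕ | ↑u.support ⊆ G})
    (hfm : f • m = 0) : f = 0 := by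
  classical
  ext u₀
  by_contra hu₀
  rw [coeff_zero] at hu₀
  have hexpand : f • m = ∑ u ∈ f.support, coeff u f • (monomial u (1 : k) • m) := by
    conv_lhs => rw [f.as_sum]
    refine Finset.sum_smul.trans (Finset.sum_congr rfl fun u _ => ?_)
    rw [← smul_assoc, smul_monomial, smul_eq_mul, mul_one]
  have hdeg_inj : ∀ u : Fin n →₀ ℕ,
      (a + fun q => (u q : ℤ)) = (a + fun q => (u₀ q : ℤ)) ↔ u = u₀ := by
    intro u
    rw [add_right_inj]
    exact ⟨fun h => Finsupp.ext fun q => by exact_mod_cast congrFun h q, fun h => h ▸ rfl⟩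
  have hcomponent := hgr.sum_filter_eq_sum (s := f.support) (b := a + fun q => (u₀ q : ℤ))
    (fun u _ => Submodule.smul_mem _ _ (monomial_smul_mem hX u hm))
    (by rw [← hexpand, hfm]; exact zero_mem _)
  rw [Finset.filter_congr (fun u _ => hdeg_inj u), Finset.filter_eq',
    if_pos (mem_support_iff.mpr hu₀), Finset.sum_singleton, ← hexpand, hfm] at hcomponent
  exact smul_ne_zero hu₀ (hS u₀ (hf (mem_support_iff.mpr hu₀))) hcomponent

end ScalarTower

namespace IsSortedSquarefreeStanley

variable {gr : (Fin n → ℤ) → Submodule k M} {p : ℕ} {m : Fin p → M} {G : Fin p → Set (Fin n)}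
  {d : Fin p → Fin n → ℤ}

theorem X_smul_mem_span (h : IsSortedSquarefreeStanley gr m G d) {j : Fin p} {l : Fin n}
    (hl : l ∉ G j) :
    (X l : MvPolynomial (Fin n) k) • m j ∈ Submodule.span k (m '' {i | (i : ℕ) < j}) := by
  refine Submodule.span_mono ?_ (mem_span_stanleyMonomials_of_mem h.iSupIndep_gr h.X_smul_mem_gr
    h.mem_gr h.isStanleyDecomposition.2.submodule_iSup_eq_top
    (h.X_smul_mem_gr l _ _ (h.mem_gr j)))
  rintro _ ⟨i, u, hu, hdeg, rfl⟩
  rw [h.G_eq] at hu hl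
  obtain rfl : u = 0 := eq_zero_of_add_eq_add_eZ (fun q hq => hu (Finsupp.mem_support_iff.mpr hq))
    (h.le_one j) (not_lt.mp hl) hdeg
  have hsum : ∑ q, d i q = ∑ q, d j q + 1 := by
    simpa [eZ, Finset.sum_add_distrib] using congrArg (fun a => ∑ q, a q) hdeg
  refine ⟨i, show (i : ℕ) < j from lt_of_not_ge fun hji => ?_, by simp⟩
  have := h.sum_antitone (Fin.le_def.mpr hji)
  simp only at this
  omega

variable [IsScalarTower k (MvPolynomial (Fin n) k) M]

theorem smul_mem_partialSpan_of_mem (h : IsSortedSquarefreeStanley gr m G d) (j : Fin p)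
    {f : MvPolynomial (Fin n) k} (hf : f ∈ Ideal.span (X '' (G j)ᶜ)) :
    f • m j ∈ partialSpan k n M m j := by
  suffices Ideal.span (X '' (G j)ᶜ) ≤
      (partialSpan k n M m j).comap (LinearMap.toSpanSingleton _ M (m j)) from this hf
  rw [Ideal.span_le]
  rintro _ ⟨l, hl, rfl⟩
  exact Submodule.span_le_restrictScalars k _ _ (h.X_smul_mem_span hl)

theorem smul_mem_stanleyPrefix (h : IsSortedSquarefreeStanley gr m G d) (i : Fin p)
    (f : MvPolynomial (Fin n) k) : f • m i ∈ stanleyPrefix k m G (i + 1) := by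
  induction i using WellFoundedLT.induction generalizing f with
  | ind i ih =>
  obtain ⟨g, hg, hfg⟩ := exists_mem_restrictSupport_sub_mem_span_X f (G i)
  have hprefix := partialSpan_subset_stanleyPrefix fun i' hi' f' =>
    stanleyPrefix_mono m G (Nat.succ_le_of_lt hi') (ih i' hi' f')
  rw [← sub_add_cancel f g, add_smul]
  refine add_mem (stanleyPrefix_mono m G (Nat.le_succ _)
    (hprefix (h.smul_mem_partialSpan_of_mem i hfg))) ?_
  refine Submodule.mem_iSup_of_mem i (Submodule.mem_iSup_of_mem (Nat.lt_succ_self _) ?_)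
  rw [stanleySpan_eq_map]
  exact Submodule.mem_map_of_mem hg

theorem smul_mem_partialSpan_iff (h : IsSortedSquarefreeStanley gr m G d) (j : Fin p)
    {f : MvPolynomial (Fin n) k} :
    f • m j ∈ partialSpan k n M m j ↔ f ∈ Ideal.span (X '' (G j)ᶜ) := by
  refine ⟨fun hf => ?_, h.smul_mem_partialSpan_of_mem j⟩
  obtain ⟨g, hg, hfg⟩ := exists_mem_restrictSupport_sub_mem_span_X f (G j)
  have hg_prefix : g • m j ∈ stanleyPrefix k m G j := by
    refine partialSpan_subset_stanleyPrefix (fun i hi f => stanleyPrefix_mono m G hi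
      (h.smul_mem_stanleyPrefix i f)) ?_
    rw [← sub_sub_cancel f g, sub_smul]
    exact sub_mem hf (h.smul_mem_partialSpan_of_mem j hfg)
  have hg_span : g • m j ∈ stanleySpan k n M (m j) (G j) := by
    rw [stanleySpan_eq_map]
    exact Submodule.mem_map_of_mem hg
  have hprefix_le : stanleyPrefix k m G j ≤ ⨆ (i) (_ : i ≠ j), stanleySpan k n M (m i) (G i) :=
    biSup_mono fun i hi => Fin.ne_of_lt hi
  have hg_zero : g • m j = 0 :=
    Submodule.disjoint_def.mp (iSupIndep_def.mp
      h.isStanleyDecomposition.2.submodule_iSupIndep j) _ hg_span (hprefix_le hg_prefix)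
  rwa [h.isStanleyDecomposition.1 j |>.eq_zero_of_smul_eq_zero h.iSupIndep_gr h.X_smul_mem_gr
    (h.mem_gr j) hg hg_zero, sub_zero] at hfg

end IsSortedSquarefreeStanley

end Paper

open MvPolynomial Paper in
theorem stmt_10_general {k : Type} [Field k] {n : ℕ}
    (M : Type) [AddCommGroup M] [Module (MvPolynomial (Fin n) k) M]
    [Module k M] [IsScalarTower k (MvPolynomial (Fin n) k) M]
    -- `gr` is the `ℤⁿ`-grading of `M`
    (gr : (Fin n → ℤ) → Submodule k M)
    (hgr_internal : DirectSum.IsInternal gr)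
    (hgr_compat : ∀ (j : Fin n) (a : Fin n → ℤ), ∀ x ∈ gr a,
      (X j : MvPolynomial (Fin n) k) • x ∈ gr (a + eZ n j))
    -- a Stanley decomposition `{(m i, G i)}` of `M` …
    {p : ℕ} (m : Fin p → M) (G : Fin p → Set (Fin n)) (d : Fin p → (Fin n → ℤ))
    (hSD : IsStanleyDecomposition k n M m G)
    -- … by homogeneous elements `m i` of degree `d i`,
    (hdeg : ∀ i, m i ∈ gr (d i))
    -- with `(d i)⁺` square-free,
    (hsf : ∀ i l, d i l ≤ 1)
    -- `G i = supp ((d i)⁺)`,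
    (hG : ∀ i, G i = {l | 0 < d i l})
    -- and the pairs ordered by weakly decreasing total degree:
    (hord : ∀ i j : Fin p, i ≤ j → (∑ l, d j l) ≤ (∑ l, d i l)) :
    -- Then, with `M⁽ʲ⁾ = R m_1 + ⋯ + R m_j`, there is a short exact sequence
    -- `0 → M⁽ʲ⁻¹⁾ → M⁽ʲ⁾ → k[G j](-d j) → 0`, where the quotient
    -- `M⁽ʲ⁾/M⁽ʲ⁻¹⁾ ≅ k[G j](-d j) = (R/(x_l : l ∉ G j))(-d j)` is the free
    -- `k[G j]`-module on the class of `m j`: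
    ∀ j : Fin p,
      partialSpan k n M m (j : ℕ) ≤ partialSpan k n M m ((j : ℕ) + 1) ∧
      ∃ (hm : m j ∈ partialSpan k n M m ((j : ℕ) + 1))
        (e : (partialSpan k n M m ((j : ℕ) + 1) ⧸
              Submodule.comap (partialSpan k n M m ((j : ℕ) + 1)).subtype
                (partialSpan k n M m (j : ℕ))) ≃ₗ[MvPolynomial (Fin n) k]
            (MvPolynomial (Fin n) k ⧸
              Ideal.span {f : MvPolynomial (Fin n) k | ∃ l, l ∉ G j ∧ f = X l})),
        e (Submodule.Quotient.mk ⟨m j, hm⟩) =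
          Submodule.Quotient.mk (1 : MvPolynomial (Fin n) k) := by
  have h : IsSortedSquarefreeStanley gr m G d :=
    ⟨hgr_internal.submodule_iSupIndep, hgr_compat, hSD, hdeg, hsf, hG, hord⟩
  intro j
  have hideal : {f : MvPolynomial (Fin n) k | ∃ l, l ∉ G j ∧ f = X l} = X '' (G j)ᶜ := by
    ext f
    simp [eq_comm]
  rw [partialSpan_succ, hideal]
  exact ⟨le_sup_left, Submodule.exists_quotient_sup_span_singleton_equiv _ _ _
    fun f => h.smul_mem_partialSpan_iff j⟩

open MvPolynomial Paper in
theorem stmt_10 {k : Type} [Field k] {n : ℕ}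
    (M : Type) [AddCommGroup M] [Module (MvPolynomial (Fin n) k) M]
    [Module k M] [IsScalarTower k (MvPolynomial (Fin n) k) M]
    [Module.Finite (MvPolynomial (Fin n) k) M]
    -- `gr` is the `ℤⁿ`-grading of `M`
    (gr : (Fin n → ℤ) → Submodule k M)
    (hgr_internal : DirectSum.IsInternal gr)
    (hgr_compat : ∀ (j : Fin n) (a : Fin n → ℤ), ∀ x ∈ gr a,
      (X j : MvPolynomial (Fin n) k) • x ∈ gr (a + eZ n j))
    -- a Stanley decomposition `{(m i, G i)}` of `M` …
    {p : ℕ} (m : Fin p → M) (G : Fin p → Set (Fin n)) (d : Fin p → (Fin n → ℤ))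
    (hSD : IsStanleyDecomposition k n M m G)
    -- … by homogeneous elements `m i` of degree `d i`,
    (hdeg : ∀ i, m i ∈ gr (d i))
    -- with `(d i)⁺` square-free,
    (hsf : ∀ i l, d i l ≤ 1)
    -- `G i = supp ((d i)⁺)`,
    (hG : ∀ i, G i = {l | 0 < d i l})
    -- and the pairs ordered by weakly decreasing total degree:
    (hord : ∀ i j : Fin p, i ≤ j → (∑ l, d j l) ≤ (∑ l, d i l)) :
    -- Then, with `M⁽ʲ⁾ = R m_1 + ⋯ + R m_j`, there is a short exact sequence
    -- `0 → M⁽ʲ⁻¹⁾ → M⁽ʲ⁾ → k[G j](-d j) → 0`, where the quotient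
    -- `M⁽ʲ⁾/M⁽ʲ⁻¹⁾ ≅ k[G j](-d j) = (R/(x_l : l ∉ G j))(-d j)` is the free
    -- `k[G j]`-module on the class of `m j`:
    ∀ j : Fin p,
      partialSpan k n M m (j : ℕ) ≤ partialSpan k n M m ((j : ℕ) + 1) ∧
      ∃ (hm : m j ∈ partialSpan k n M m ((j : ℕ) + 1))
        (e : (partialSpan k n M m ((j : ℕ) + 1) ⧸
              Submodule.comap (partialSpan k n M m ((j : ℕ) + 1)).subtype
                (partialSpan k n M m (j : ℕ))) ≃ₗ[MvPolynomial (Fin n) k]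
            (MvPolynomial (Fin n) k ⧸
              Ideal.span {f : MvPolynomial (Fin n) k | ∃ l, l ∉ G j ∧ f = X l})),
        e (Submodule.Quotient.mk ⟨m j, hm⟩) =
          Submodule.Quotient.mk (1 : MvPolynomial (Fin n) k) :=
  stmt_10_general M gr hgr_internal hgr_compat m G d hSD hdeg hsf hG hord
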